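/- Let α be an order function with dual function β, and consider an indeterminate moment problem. The following are equivalent: (i) ∑_n β(P_n(0)²) < ∞ and ∑_n β(Q_n(0)²) < ∞; (ii) for every z ∈ ℂ, ∑_n β(|P_n(z)|²) < ∞ and ∑_n β(|Q_n(z)|²) < ∞. If these conditions hold, then ∑_n β(1/b_n) < ∞ and P has order bounded by α, i.e. there exists K > 0 with M_P(r) ≤ r^{K·α(r)} for all sufficiently large r. -/

import Mathlib

/-- An order function: a continuous, positive, increasing function `α` on `(r0, ∞)` tending
to `∞`, such that `r / α(r)` is also increasing and tends to `∞`. -/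
def IsOrderFunction (r0 : ℝ) (α : ℝ → ℝ) : Prop :=
  0 ≤ r0 ∧ ContinuousOn α (Set.Ioi r0) ∧ (∀ r ∈ Set.Ioi r0, 0 < α r) ∧
    StrictMonoOn α (Set.Ioi r0) ∧ Filter.Tendsto α Filter.atTop Filter.atTop ∧
    StrictMonoOn (fun r => r / α r) (Set.Ioi r0) ∧
    Filter.Tendsto (fun r => r / α r) Filter.atTop Filter.atTop

/-- The dual function `β(r) = 1 / α(1/r)` of an order function `α`, with `β(0) = 0`. -/
noncomputable def dualFn (α : ℝ → ℝ) (t : ℝ) : ℝ :=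
  if t = 0 then 0 else (α t⁻¹)⁻¹

/-- The maximum of `P(z) = (∑ |P_n(z)|²)^{1/2}` over the closed disk of radius `r`. -/
noncomputable def Pmax (P : ℕ → ℂ → ℂ) (r : ℝ) : ℝ :=
  sSup ((fun z : ℂ => Real.sqrt (∑' n : ℕ, ‖P n z‖ ^ 2)) '' Metric.closedBall (0 : ℂ) r)

/-!
Write `p_n = P_n(0)`, `q_n = Q_n(0)` and `d_n = |p_n| + |q_n|`, so that `∑ d_n² < ∞`.
Variation of constants writes `P_{n+1}(z)` and `Q_{n+1}(z)` as their values at `0` plus `z` times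
sums over `k ≤ n` with coefficients `q_{n+1} p_k - p_{n+1} q_k` of size at most `d_{n+1} d_k`, and a
discrete Gronwall argument gives `|P_n(z)| + |Q_n(z)| ≤ d_n ∏_{k<n} (1 + |z| d_k²)`. The product
is bounded by `exp (|z| ∑ d_k²)`, and `β(M t) ≤ M β(t)` for `M ≥ 1` and small `t` (monotonicity
of `r / α(r)`) transfers `∑ β(d_n²) < ∞` to every `z`. The Wronskian
`b_n (p_{n+1} q_n - p_n q_{n+1}) = -1` gives `1 / b_n ≤ d_n d_{n+1}`. Finally, for small `t`,
`log (1 + r t) ≤ 2 log r · α(r) β(t)`, so `log M_P(r) ≤ log ∏ (1 + r d_k²) + O(log r)` is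
`O(α(r) log r)`.
-/

open Finset Filter Topology

/-- `γ` stands for the term `b₋₁ r₋₁ = r₋₁`, so that `P` solves the recurrence with `γ = 0` and
`Q` with `γ = -1`. -/
def IsJacobiSolution (a b : ℕ → ℝ) (z γ : ℂ) (r : ℕ → ℂ) : Prop :=
  z * r 0 = (b 0 : ℂ) * r 1 + (a 0 : ℂ) * r 0 + γ ∧
    ∀ n, z * r (n + 1) = (b (n + 1) : ℂ) * r (n + 2) + (a (n + 1) : ℂ) * r (n + 1) + (b n : ℂ) * r n

theorem IsJacobiSolution.christoffel_darboux {a b : ℕ → ℝ} {z w γ δ : ℂ} {r s : ℕ → ℂ}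
    (hr : IsJacobiSolution a b z γ r) (hs : IsJacobiSolution a b w δ s) (n : ℕ) :
    (z - w) * ∑ k ∈ range (n + 1), r k * s k =
      b n * (r (n + 1) * s n - r n * s (n + 1)) + (γ * s 0 - δ * r 0) := by
  induction n with
  | zero =>
    simp only [zero_add, sum_range_one]
    linear_combination s 0 * hr.1 - r 0 * hs.1
  | succ n ih =>
    rw [sum_range_succ, mul_add, ih]
    linear_combination s (n + 1) * hr.2 n - r (n + 1) * hs.2 n

/-- The polynomials of the first (`P`) and second (`Q`) kind of the Jacobi matrix `(a, b)`. -/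
structure JacobiPair (a b : ℕ → ℝ) (P Q : ℕ → ℂ → ℂ) : Prop where
  isJacobiSolution_P : ∀ z, IsJacobiSolution a b z 0 (P · z)
  isJacobiSolution_Q : ∀ z, IsJacobiSolution a b z (-1) (Q · z)
  P_zero : ∀ z, P 0 z = 1
  Q_zero : ∀ z, Q 0 z = 0

theorem norm_mul_sub_mul_le {R : Type*} [SeminormedRing R] (x y u v : R) :
    ‖x * u - y * v‖ ≤ (‖x‖ + ‖y‖) * (‖u‖ + ‖v‖) := by
  have hx := norm_nonneg x; have hy := norm_nonneg y
  have hu := norm_nonneg u; have hv := norm_nonneg v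
  calc ‖x * u - y * v‖ ≤ ‖x‖ * ‖u‖ + ‖y‖ * ‖v‖ :=
        (norm_sub_le _ _).trans (add_le_add (norm_mul_le _ _) (norm_mul_le _ _))
    _ ≤ (‖x‖ + ‖y‖) * (‖u‖ + ‖v‖) := by nlinarith [mul_nonneg hx hv, mul_nonneg hy hu]

theorem le_mul_prod_one_add_of_le {x d : ℕ → ℝ} {c : ℝ} (hc : 0 ≤ c) (hd : ∀ n, 0 ≤ d n)
    (hx : ∀ n, x n ≤ d n * (1 + c * ∑ k ∈ range n, d k * x k)) (n : ℕ) :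
    x n ≤ d n * ∏ k ∈ range n, (1 + c * d k ^ 2) := by
  have key : ∀ n, 1 + c * ∑ k ∈ range n, d k * x k ≤ ∏ k ∈ range n, (1 + c * d k ^ 2) := by
    intro n
    induction n with
    | zero => simp
    | succ n ih =>
      have hcd : 0 ≤ c * d n := mul_nonneg hc (hd n)
      calc 1 + c * ∑ k ∈ range (n + 1), d k * x k
          = (1 + c * ∑ k ∈ range n, d k * x k) + c * d n * x n := by
            rw [sum_range_succ]; ring
        _ ≤ (1 + c * ∑ k ∈ range n, d k * x k) +
              c * d n * (d n * (1 + c * ∑ k ∈ range n, d k * x k)) := by gcongr; exact hx n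
        _ = (1 + c * ∑ k ∈ range n, d k * x k) * (1 + c * d n ^ 2) := by ring
        _ ≤ ∏ k ∈ range (n + 1), (1 + c * d k ^ 2) := by
            rw [prod_range_succ]; gcongr
  exact (hx n).trans (mul_le_mul_of_nonneg_left (key n) (hd n))

namespace JacobiPair

variable {a b : ℕ → ℝ} {P Q : ℕ → ℂ → ℂ}

theorem wronskian (h : JacobiPair a b P Q) (n : ℕ) :
    (b n : ℂ) * (P (n + 1) 0 * Q n 0 - P n 0 * Q (n + 1) 0) = -1 := by
  have := (h.isJacobiSolution_P 0).christoffel_darboux (h.isJacobiSolution_Q 0) n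
  simp only [h.P_zero] at this
  linear_combination -this

theorem eq_add_mul_sum (h : JacobiPair a b P Q) {z γ : ℂ} {R : ℕ → ℂ}
    (hR : IsJacobiSolution a b z γ R) (n : ℕ) :
    R (n + 1) = P (n + 1) 0 * R 0 - γ * Q (n + 1) 0 +
      z * ∑ k ∈ range (n + 1), (Q (n + 1) 0 * P k 0 - P (n + 1) 0 * Q k 0) * R k := by
  have hRP := hR.christoffel_darboux (h.isJacobiSolution_P 0) n
  have hRQ := hR.christoffel_darboux (h.isJacobiSolution_Q 0) n
  simp only [sub_zero, h.P_zero, h.Q_zero] at hRP hRQ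
  have hsplit : z * ∑ k ∈ range (n + 1), (Q (n + 1) 0 * P k 0 - P (n + 1) 0 * Q k 0) * R k =
      Q (n + 1) 0 * (z * ∑ k ∈ range (n + 1), R k * P k 0) -
        P (n + 1) 0 * (z * ∑ k ∈ range (n + 1), R k * Q k 0) := by
    simp only [mul_sum, ← sum_sub_distrib]
    exact sum_congr rfl fun k _ => by ring
  rw [hsplit]
  linear_combination R (n + 1) * h.wronskian n - Q (n + 1) 0 * hRP + P (n + 1) 0 * hRQ

theorem inv_le_mul (h : JacobiPair a b P Q) {n : ℕ} (hb : 0 < b n) :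
    (b n)⁻¹ ≤ (‖P n 0‖ + ‖Q n 0‖) * (‖P (n + 1) 0‖ + ‖Q (n + 1) 0‖) := by
  have hW := congrArg norm (h.wronskian n)
  rw [norm_mul, Complex.norm_real, Real.norm_of_nonneg hb.le, norm_neg, norm_one,
    ← norm_neg, neg_sub, mul_comm (P (n + 1) 0)] at hW
  rw [inv_le_iff_one_le_mul₀ hb, ← hW, mul_comm _ (b n)]
  refine mul_le_mul_of_nonneg_left ?_ hb.le
  exact (norm_mul_sub_mul_le _ _ _ _).trans_eq (by ring)

theorem norm_add_norm_le_mul_prod (h : JacobiPair a b P Q) (z : ℂ) (n : ℕ) :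
    ‖P n z‖ + ‖Q n z‖ ≤ (‖P n 0‖ + ‖Q n 0‖) *
      ∏ k ∈ range n, (1 + ‖z‖ * (‖P k 0‖ + ‖Q k 0‖) ^ 2) := by
  set d : ℕ → ℝ := fun k => ‖P k 0‖ + ‖Q k 0‖
  refine le_mul_prod_one_add_of_le (x := fun k => ‖P k z‖ + ‖Q k z‖) (d := d)
    (norm_nonneg z) (fun k => by positivity) (fun n => ?_) n
  cases n with
  | zero => simp [d, h.P_zero, h.Q_zero]
  | succ n =>
    have hR : ∀ {γ : ℂ} {R : ℕ → ℂ}, IsJacobiSolution a b z γ R →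
        ‖R (n + 1)‖ ≤ ‖P (n + 1) 0 * R 0 - γ * Q (n + 1) 0‖ +
          ‖z‖ * ∑ k ∈ range (n + 1), d (n + 1) * (d k * ‖R k‖) := by
      intro γ R hR
      rw [h.eq_add_mul_sum hR n]
      refine (norm_add_le _ _).trans (add_le_add_right ?_ _)
      rw [norm_mul]
      gcongr
      refine (norm_sum_le _ _).trans (sum_le_sum fun k _ => ?_)
      rw [norm_mul, ← mul_assoc]
      gcongr
      exact (norm_mul_sub_mul_le _ _ _ _).trans_eq (by ring)
    have hP := hR (h.isJacobiSolution_P z)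
    have hQ := hR (h.isJacobiSolution_Q z)
    simp only [h.P_zero, h.Q_zero, mul_one, mul_zero, zero_mul, sub_zero, neg_mul, one_mul,
      sub_neg_eq_add, zero_add] at hP hQ
    calc ‖P (n + 1) z‖ + ‖Q (n + 1) z‖
        ≤ d (n + 1) + ‖z‖ * ∑ k ∈ range (n + 1), d (n + 1) * (d k * (‖P k z‖ + ‖Q k z‖)) := by
          simp only [mul_add, sum_add_distrib]
          linarith
      _ = d (n + 1) * (1 + ‖z‖ * ∑ k ∈ range (n + 1), d k * (‖P k z‖ + ‖Q k z‖)) := by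
          rw [← mul_sum]; ring

end JacobiPair

theorem lt_inv_of_le_inv_add_one {r t : ℝ} (ht : 0 < t) (h : t ≤ (r + 1)⁻¹) : r < t⁻¹ := by
  have : r + 1 ≤ t⁻¹ := by simpa using inv_anti₀ ht h
  linarith

theorem Real.log_one_add_mul_le {r t : ℝ} (hr : Real.exp 1 ≤ r) (ht : 0 ≤ t) (ht1 : t ≤ 1) :
    Real.log (1 + r * t) ≤ 2 * Real.log r * min 1 (r * t) := by
  have hr2 : 2 ≤ r := by linarith [Real.add_one_le_exp 1]
  have hlog : 1 ≤ Real.log r := by rwa [Real.le_log_iff_exp_le (by positivity)]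
  rcases le_total (r * t) 1 with hrt | hrt
  · rw [min_eq_right hrt]
    have := Real.log_le_sub_one_of_pos (show 0 < 1 + r * t by positivity)
    nlinarith [mul_le_mul_of_nonneg_right hlog (mul_nonneg (by linarith : 0 ≤ r) ht)]
  · rw [min_eq_left hrt, mul_one]
    calc Real.log (1 + r * t) ≤ Real.log (r * r) := Real.log_le_log (by positivity) (by nlinarith)
      _ = 2 * Real.log r := by rw [Real.log_mul (by positivity) (by positivity)]; ring

theorem tsum_le_mul_add_tsum {f g : ℕ → ℝ} (hf : Summable f) (hg : Summable g)
    (hg0 : ∀ k, 0 ≤ g k) {N : ℕ} {A : ℝ} (hhead : ∀ k < N, f k ≤ A)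
    (htail : ∀ k, N ≤ k → f k ≤ g k) : ∑' k, f k ≤ N * A + ∑' k, g k := by
  have hsum : ∑ k ∈ range N, f k ≤ N * A := by
    simpa using sum_le_card_nsmul (range N) f A fun k hk => hhead k (mem_range.1 hk)
  have htsum : ∑' k, f (k + N) ≤ ∑' k, g (k + N) :=
    Summable.tsum_le_tsum (fun k => htail _ (Nat.le_add_left N k))
      ((summable_nat_add_iff N).2 hf) ((summable_nat_add_iff N).2 hg)
  have hg_head : 0 ≤ ∑ k ∈ range N, g k := sum_nonneg fun k _ => hg0 k
  rw [← hf.sum_add_tsum_nat_add N, ← hg.sum_add_tsum_nat_add N]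
  linarith

theorem sqrt_tsum_norm_sq_le_of_le_mul {E : Type*} [SeminormedAddGroup E] {f : ℕ → E}
    {d : ℕ → ℝ} {M : ℝ} (hM : 0 ≤ M) (hd : Summable fun n => d n ^ 2)
    (hfd : ∀ n, ‖f n‖ ≤ d n * M) : √(∑' n, ‖f n‖ ^ 2) ≤ √(∑' n, d n ^ 2) * M := by
  have hsq : ∀ n, ‖f n‖ ^ 2 ≤ d n ^ 2 * M ^ 2 := fun n => by
    rw [← mul_pow]; exact pow_le_pow_left₀ (norm_nonneg _) (hfd n) 2
  have hsum : ∑' n, ‖f n‖ ^ 2 ≤ (∑' n, d n ^ 2) * M ^ 2 :=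
    (Summable.tsum_le_tsum hsq (.of_nonneg_of_le (fun n => by positivity) hsq (hd.mul_right _))
      (hd.mul_right _)).trans_eq tsum_mul_right
  calc √(∑' n, ‖f n‖ ^ 2) ≤ √((∑' n, d n ^ 2) * M ^ 2) := Real.sqrt_le_sqrt hsum
    _ = √(∑' n, d n ^ 2) * M := by
        rw [Real.sqrt_mul (tsum_nonneg fun n => sq_nonneg _), Real.sqrt_sq hM]

theorem dualFn_of_pos {α : ℝ → ℝ} {t : ℝ} (ht : 0 < t) : dualFn α t = (α t⁻¹)⁻¹ :=
  if_neg ht.ne'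

namespace IsOrderFunction

variable {r0 : ℝ} {α : ℝ → ℝ}

theorem nonneg (hα : IsOrderFunction r0 α) : 0 ≤ r0 := hα.1

theorem pos (hα : IsOrderFunction r0 α) {r : ℝ} (hr : r0 < r) : 0 < α r := hα.2.2.1 r hr

theorem monotoneOn (hα : IsOrderFunction r0 α) : MonotoneOn α (Set.Ioi r0) :=
  hα.2.2.2.1.monotoneOn

theorem tendsto_atTop (hα : IsOrderFunction r0 α) : Tendsto α atTop atTop := hα.2.2.2.2.1

theorem monotoneOn_div (hα : IsOrderFunction r0 α) :
    MonotoneOn (fun r => r / α r) (Set.Ioi r0) :=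
  hα.2.2.2.2.2.1.monotoneOn

theorem dualFn_nonneg (hα : IsOrderFunction r0 α) {t : ℝ} (ht : 0 ≤ t)
    (htε : t ≤ (r0 + 1)⁻¹) : 0 ≤ dualFn α t := by
  rcases ht.eq_or_lt with rfl | ht
  · simp [dualFn]
  · rw [dualFn_of_pos ht]
    exact (inv_pos.2 (hα.pos (lt_inv_of_le_inv_add_one ht htε))).le

theorem dualFn_le_dualFn (hα : IsOrderFunction r0 α) {s t : ℝ} (hs : 0 ≤ s) (hst : s ≤ t)
    (htε : t ≤ (r0 + 1)⁻¹) : dualFn α s ≤ dualFn α t := by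
  rcases hs.eq_or_lt with rfl | hs
  · simpa [dualFn] using hα.dualFn_nonneg hst htε
  have ht := hs.trans_le hst
  have hs_mem := lt_inv_of_le_inv_add_one hs (hst.trans htε)
  have ht_mem := lt_inv_of_le_inv_add_one ht htε
  rw [dualFn_of_pos hs, dualFn_of_pos ht]
  exact inv_anti₀ (hα.pos ht_mem) (hα.monotoneOn ht_mem hs_mem (inv_anti₀ hs hst))

/-- This is the monotonicity of `r / α(r)` between `r = (M t)⁻¹` and `r = t⁻¹`. -/
theorem dualFn_mul_le (hα : IsOrderFunction r0 α) {M t : ℝ} (hM : 1 ≤ M) (ht : 0 ≤ t)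
    (htε : M * t ≤ (r0 + 1)⁻¹) : dualFn α (M * t) ≤ M * dualFn α t := by
  rcases ht.eq_or_lt with rfl | ht
  · simp [dualFn]
  have hMt : 0 < M * t := mul_pos (one_pos.trans_le hM) ht
  have hle : t ≤ M * t := le_mul_of_one_le_left ht.le hM
  have hMt_mem := lt_inv_of_le_inv_add_one hMt htε
  have ht_mem := lt_inv_of_le_inv_add_one ht (hle.trans htε)
  have hαMt := hα.pos hMt_mem
  have hαt := hα.pos ht_mem
  have hratio := hα.monotoneOn_div hMt_mem ht_mem (inv_anti₀ ht hle)
  rw [dualFn_of_pos hMt, dualFn_of_pos ht]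
  calc (α (M * t)⁻¹)⁻¹ = M * t * ((M * t)⁻¹ / α (M * t)⁻¹) := by field_simp
    _ ≤ M * t * (t⁻¹ / α t⁻¹) := by gcongr
    _ = M * (α t⁻¹)⁻¹ := by field_simp

theorem dualFn_add_le (hα : IsOrderFunction r0 α) {s t : ℝ} (hs : 0 ≤ s) (ht : 0 ≤ t)
    (hε : 2 * (s + t) ≤ (r0 + 1)⁻¹) : dualFn α (s + t) ≤ 2 * (dualFn α s + dualFn α t) := by
  wlog hst : s ≤ t generalizing s t
  · rw [add_comm s, add_comm (dualFn α s)]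
    exact this ht hs (by linarith) (by linarith)
  have h2t : 2 * t ≤ (r0 + 1)⁻¹ := by linarith
  calc dualFn α (s + t) ≤ dualFn α (2 * t) :=
        hα.dualFn_le_dualFn (by positivity) (by linarith) h2t
    _ ≤ 2 * dualFn α t := hα.dualFn_mul_le one_le_two ht h2t
    _ ≤ 2 * (dualFn α s + dualFn α t) := by
        have := hα.dualFn_nonneg hs (by linarith)
        linarith

/-- The regime `r t ≤ 1` uses the monotonicity of `r / α(r)`, the regime `r t ≥ 1` that of `α`. -/
theorem min_one_mul_le_mul_dualFn (hα : IsOrderFunction r0 α) {r t : ℝ} (hr : r0 < r)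
    (ht : 0 ≤ t) (htε : t ≤ (r0 + 1)⁻¹) : min 1 (r * t) ≤ α r * dualFn α t := by
  rcases ht.eq_or_lt with rfl | ht
  · simp [dualFn]
  have ht_mem := lt_inv_of_le_inv_add_one ht htε
  have hαr := hα.pos hr
  have hαt := hα.pos ht_mem
  rw [dualFn_of_pos ht, ← div_eq_mul_inv, le_div_iff₀ hαt]
  rcases le_total r t⁻¹ with hrt | hrt
  · have hratio := hα.monotoneOn_div hr ht_mem hrt
    rw [div_le_div_iff₀ hαr hαt] at hratio
    calc min 1 (r * t) * α t⁻¹ ≤ r * t * α t⁻¹ := by gcongr; exact min_le_right _ _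
      _ = r * α t⁻¹ * t := by ring
      _ ≤ t⁻¹ * α r * t := by gcongr
      _ = α r := by field_simp
  · calc min 1 (r * t) * α t⁻¹ ≤ 1 * α t⁻¹ := by gcongr; exact min_le_left _ _
      _ ≤ α r := by rw [one_mul]; exact hα.monotoneOn ht_mem hr hrt

theorem summable_dualFn_of_le_mul (hα : IsOrderFunction r0 α) {u w : ℕ → ℝ} {M : ℝ}
    (hu : Tendsto u atTop (𝓝 0)) (hw : ∀ n, 0 ≤ w n) (hM : 1 ≤ M)
    (hwu : ∀ n, w n ≤ M * u n) (hβ : Summable fun n => dualFn α (u n)) :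
    Summable fun n => dualFn α (w n) := by
  have hM0 : 0 < M := one_pos.trans_le hM
  have hε : 0 < (r0 + 1)⁻¹ / M := by have := hα.nonneg; positivity
  refine .of_norm_bounded_eventually_nat (hβ.mul_left M) ?_
  filter_upwards [hu.eventually (eventually_le_nhds hε)] with n hn
  have hMu : M * u n ≤ (r0 + 1)⁻¹ := by rwa [le_div_iff₀' hM0] at hn
  have hu0 : 0 ≤ u n := nonneg_of_mul_nonneg_right ((hw n).trans (hwu n)) hM0
  rw [Real.norm_of_nonneg (hα.dualFn_nonneg (hw n) ((hwu n).trans hMu))]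
  exact (hα.dualFn_le_dualFn (hw n) (hwu n) hMu).trans (hα.dualFn_mul_le hM hu0 hMu)

theorem summable_dualFn_add (hα : IsOrderFunction r0 α) {u v : ℕ → ℝ}
    (hu : ∀ n, 0 ≤ u n) (hv : ∀ n, 0 ≤ v n) (huv : Tendsto (fun n => u n + v n) atTop (𝓝 0))
    (hβu : Summable fun n => dualFn α (u n)) (hβv : Summable fun n => dualFn α (v n)) :
    Summable fun n => dualFn α (u n + v n) := by
  have hε : 0 < (r0 + 1)⁻¹ / 2 := by have := hα.nonneg; positivity
  refine .of_norm_bounded_eventually_nat ((hβu.add hβv).mul_left 2) ?_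
  filter_upwards [huv.eventually (eventually_le_nhds hε)] with n hn
  have h2 : 2 * (u n + v n) ≤ (r0 + 1)⁻¹ := by linarith
  rw [Real.norm_of_nonneg (hα.dualFn_nonneg (add_nonneg (hu n) (hv n)) (by linarith))]
  exact hα.dualFn_add_le (hu n) (hv n) h2

theorem summable_dualFn_add_sq (hα : IsOrderFunction r0 α) {x y : ℕ → ℝ}
    (hxy : Summable fun n => x n ^ 2 + y n ^ 2) (hβx : Summable fun n => dualFn α (x n ^ 2))
    (hβy : Summable fun n => dualFn α (y n ^ 2)) :
    Summable fun n => dualFn α ((x n + y n) ^ 2) :=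
  hα.summable_dualFn_of_le_mul hxy.tendsto_atTop_zero (fun _ => sq_nonneg _) one_le_two
    (fun _ => add_sq_le)
    (hα.summable_dualFn_add (fun _ => sq_nonneg _) (fun _ => sq_nonneg _)
      hxy.tendsto_atTop_zero hβx hβy)

theorem summable_dualFn_of_le_mul_succ (hα : IsOrderFunction r0 α) {w d : ℕ → ℝ}
    (hw : ∀ n, 0 ≤ w n) (hd : Summable fun n => d n ^ 2)
    (hβ : Summable fun n => dualFn α (d n ^ 2)) (hwd : ∀ n, w n ≤ d n * d (n + 1)) :
    Summable fun n => dualFn α (w n) := by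
  have hdd : Tendsto (fun n => d n ^ 2 + d (n + 1) ^ 2) atTop (𝓝 0) :=
    (hd.add ((summable_nat_add_iff 1).2 hd)).tendsto_atTop_zero
  refine hα.summable_dualFn_of_le_mul hdd hw le_rfl (fun n => ?_)
    (hα.summable_dualFn_add (fun n => sq_nonneg _) (fun n => sq_nonneg _) hdd hβ
      ((summable_nat_add_iff 1).2 hβ))
  nlinarith [hw n, hwd n, two_mul_le_add_sq (d n) (d (n + 1))]

theorem summable_dualFn_norm_sq {E : Type*} [SeminormedAddGroup E] (hα : IsOrderFunction r0 α)
    {f : ℕ → E} {d : ℕ → ℝ} {c : ℝ} (hc : 0 ≤ c) (hd0 : ∀ n, 0 ≤ d n)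
    (hd : Summable fun n => d n ^ 2) (hβ : Summable fun n => dualFn α (d n ^ 2))
    (hf : ∀ n, ‖f n‖ ≤ d n * ∏ k ∈ range n, (1 + c * d k ^ 2)) :
    Summable fun n => dualFn α (‖f n‖ ^ 2) := by
  set M := Real.exp (c * ∑' n, d n ^ 2)
  have hprod : ∀ n, ∏ k ∈ range n, (1 + c * d k ^ 2) ≤ M := fun n =>
    (Real.prod_one_add_le_exp_sum _ fun k => by positivity).trans <| Real.exp_le_exp.2 <| by
      rw [← mul_sum]; gcongr; exact hd.sum_le_tsum _ fun k _ => sq_nonneg _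
  have hM : 1 ≤ M ^ 2 :=
    one_le_pow₀ (Real.one_le_exp (mul_nonneg hc (tsum_nonneg fun n => sq_nonneg (d n))))
  refine hα.summable_dualFn_of_le_mul hd.tendsto_atTop_zero (fun n => by positivity) hM
    (fun n => ?_) hβ
  rw [← mul_pow, mul_comm]
  exact pow_le_pow_left₀ (norm_nonneg _)
    ((hf n).trans (mul_le_mul_of_nonneg_left (hprod n) (hd0 n))) 2

/-- Only finitely many `t_k` exceed `(r0 + 1)⁻¹`, and each of their terms is at most
`2 log r`; every other term is at most `2 log r · α(r) β(t_k)` (`Real.log_one_add_mul_le`). -/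
theorem exists_tsum_log_one_add_mul_le (hα : IsOrderFunction r0 α) {t : ℕ → ℝ}
    (ht0 : ∀ k, 0 ≤ t k) (ht : Summable t) (hβ : Summable fun k => dualFn α (t k)) :
    ∃ K, 0 < K ∧ ∀ᶠ r in atTop, ∑' k, Real.log (1 + r * t k) ≤ K * (α r * Real.log r) := by
  have hε1 : (r0 + 1)⁻¹ ≤ 1 := inv_le_one_of_one_le₀ (by linarith [hα.nonneg])
  obtain ⟨N, hN⟩ := eventually_atTop.1 (ht.tendsto_atTop_zero.eventually
    (eventually_le_nhds (by have := hα.nonneg; positivity : 0 < (r0 + 1)⁻¹)))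
  set S := ∑' k, |dualFn α (t k)|
  have hS : 0 ≤ S := tsum_nonneg fun k => abs_nonneg _
  refine ⟨N + 2 * S + 1, by positivity, ?_⟩
  filter_upwards [eventually_gt_atTop r0, eventually_ge_atTop (Real.exp 1),
    eventually_ge_atTop (∑' k, t k + 1), hα.tendsto_atTop.eventually_ge_atTop 2]
    with r hr hre hrt hαr
  have hr1 : 1 ≤ r := le_trans (by linarith [Real.add_one_le_exp 1]) hre
  have hr_pos : 0 < r := by linarith
  have hlog : 0 ≤ Real.log r := Real.log_nonneg hr1
  have hhead : ∀ k < N, Real.log (1 + r * t k) ≤ α r * Real.log r := by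
    intro k _
    have htk : t k ≤ ∑' k, t k := ht.le_tsum k fun j _ => ht0 j
    have := ht0 k
    calc Real.log (1 + r * t k) ≤ Real.log (r * r) := Real.log_le_log (by positivity) (by nlinarith)
      _ = 2 * Real.log r := by rw [Real.log_mul (by positivity) (by positivity)]; ring
      _ ≤ α r * Real.log r := by gcongr
  have htail : ∀ k, N ≤ k →
      Real.log (1 + r * t k) ≤ 2 * Real.log r * α r * |dualFn α (t k)| := by
    intro k hk
    calc Real.log (1 + r * t k) ≤ 2 * Real.log r * min 1 (r * t k) :=
          Real.log_one_add_mul_le hre (ht0 k) ((hN k hk).trans hε1)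
      _ ≤ 2 * Real.log r * (α r * dualFn α (t k)) := by
          gcongr; exact hα.min_one_mul_le_mul_dualFn hr (ht0 k) (hN k hk)
      _ ≤ 2 * Real.log r * α r * |dualFn α (t k)| := by
          rw [← mul_assoc]; gcongr; exact le_abs_self _
  calc ∑' k, Real.log (1 + r * t k)
      ≤ N * (α r * Real.log r) + ∑' k, 2 * Real.log r * α r * |dualFn α (t k)| :=
        tsum_le_mul_add_tsum (Real.summable_log_one_add_of_summable (ht.mul_left r))
          (hβ.abs.mul_left _) (fun k => by positivity) hhead htail
    _ = (N + 2 * S) * (α r * Real.log r) := by rw [tsum_mul_left]; ring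
    _ ≤ (N + 2 * S + 1) * (α r * Real.log r) := by gcongr ?_ * _; linarith

theorem exists_Pmax_le_rpow (hα : IsOrderFunction r0 α) {P : ℕ → ℂ → ℂ} {d : ℕ → ℝ}
    (hd0 : ∀ n, 0 ≤ d n) (hd : Summable fun n => d n ^ 2)
    (hβ : Summable fun n => dualFn α (d n ^ 2))
    (hP : ∀ z n, ‖P n z‖ ≤ d n * ∏ k ∈ range n, (1 + ‖z‖ * d k ^ 2)) :
    ∃ K, 0 < K ∧ ∀ᶠ r in atTop, Pmax P r ≤ r ^ (K * α r) := by
  obtain ⟨K, hK, hL⟩ := hα.exists_tsum_log_one_add_mul_le (fun n => sq_nonneg (d n)) hd hβ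
  refine ⟨K + 1, by positivity, ?_⟩
  filter_upwards [hL, eventually_ge_atTop √(∑' n, d n ^ 2), eventually_ge_atTop 1,
    hα.tendsto_atTop.eventually_ge_atTop 1] with r hLr hDr hr1 hαr
  have hr : 0 < r := one_pos.trans_le hr1
  set L := ∑' k, Real.log (1 + r * d k ^ 2)
  have hprod : ∀ z : ℂ, ‖z‖ ≤ r → ∀ n, ∏ k ∈ range n, (1 + ‖z‖ * d k ^ 2) ≤ Real.exp L := by
    intro z hz n
    calc ∏ k ∈ range n, (1 + ‖z‖ * d k ^ 2) ≤ ∏ k ∈ range n, (1 + r * d k ^ 2) :=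
          prod_le_prod (fun k _ => by positivity) fun k _ => by gcongr
      _ = Real.exp (∑ k ∈ range n, Real.log (1 + r * d k ^ 2)) := by
          rw [Real.exp_sum]; exact prod_congr rfl fun k _ => (Real.exp_log (by positivity)).symm
      _ ≤ Real.exp L := Real.exp_le_exp.2 <|
          (Real.summable_log_one_add_of_summable (hd.mul_left r)).sum_le_tsum _
            fun k _ => Real.log_nonneg (by nlinarith [sq_nonneg (d k)])
  have hbound : √(∑' n, d n ^ 2) * Real.exp L ≤ r ^ ((K + 1) * α r) := by
    have hexpL : Real.exp L ≤ r ^ (K * α r) := by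
      rw [Real.rpow_def_of_pos hr]; exact Real.exp_le_exp.2 (by linarith)
    calc √(∑' n, d n ^ 2) * Real.exp L ≤ r ^ α r * r ^ (K * α r) := by
          gcongr
          exact hDr.trans (by simpa using Real.rpow_le_rpow_of_exponent_le hr1 hαr)
      _ = r ^ ((K + 1) * α r) := by rw [← Real.rpow_add hr]; ring_nf
  refine Real.sSup_le ?_ (by positivity)
  rintro _ ⟨z, hz, rfl⟩
  refine (sqrt_tsum_norm_sq_le_of_le_mul (Real.exp_nonneg L) hd fun n => ?_).trans hbound
  exact (hP z n).trans
    (mul_le_mul_of_nonneg_left (hprod z (mem_closedBall_zero_iff.1 hz) n) (hd0 n))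

end IsOrderFunction

/-- Berg–Szwarc, Theorem 4.10: for an order function `α` with dual `β` and an indeterminate
moment problem, `∑ β(P_n(0)²), ∑ β(Q_n(0)²) < ∞` iff `∑ β(|P_n(z)|²), ∑ β(|Q_n(z)|²) < ∞`
for all `z`; when this holds, `∑ β(1/b_n) < ∞` and `P` has order bounded by `α`. -/
theorem stmt_11 (a b : ℕ → ℝ) (hb : ∀ n, 0 < b n)
    (P Q : ℕ → ℂ → ℂ)
    (hP0 : ∀ z : ℂ, P 0 z = 1) (hQ0 : ∀ z : ℂ, Q 0 z = 0)
    (hPrec0 : ∀ z : ℂ, z * P 0 z = (b 0 : ℂ) * P 1 z + (a 0 : ℂ) * P 0 z)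
    (hQrec0 : ∀ z : ℂ, z * Q 0 z = (b 0 : ℂ) * Q 1 z + (a 0 : ℂ) * Q 0 z - 1)
    (hPrec : ∀ (n : ℕ) (z : ℂ), z * P (n+1) z =
      (b (n+1) : ℂ) * P (n+2) z + (a (n+1) : ℂ) * P (n+1) z + (b n : ℂ) * P n z)
    (hQrec : ∀ (n : ℕ) (z : ℂ), z * Q (n+1) z =
      (b (n+1) : ℂ) * Q (n+2) z + (a (n+1) : ℂ) * Q (n+1) z + (b n : ℂ) * Q n z)
    (hind : Summable (fun n => ‖P n 0‖ ^ 2 + ‖Q n 0‖ ^ 2))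
    (r0 : ℝ) (α : ℝ → ℝ) (hα : IsOrderFunction r0 α) :
    ((Summable (fun n => dualFn α (‖P n 0‖ ^ 2)) ∧
      Summable (fun n => dualFn α (‖Q n 0‖ ^ 2))) ↔
      (∀ z : ℂ, Summable (fun n => dualFn α (‖P n z‖ ^ 2)) ∧
        Summable (fun n => dualFn α (‖Q n z‖ ^ 2)))) ∧
    ((Summable (fun n => dualFn α (‖P n 0‖ ^ 2)) ∧
      Summable (fun n => dualFn α (‖Q n 0‖ ^ 2))) →
      Summable (fun n => dualFn α (1 / b n)) ∧
      ∃ K : ℝ, 0 < K ∧ ∀ᶠ r : ℝ in Filter.atTop, Pmax P r ≤ r ^ (K * α r)) := by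
  have h : JacobiPair a b P Q :=
    ⟨fun z => ⟨by simpa using hPrec0 z, fun n => hPrec n z⟩,
      fun z => ⟨by simpa [← sub_eq_add_neg] using hQrec0 z, fun n => hQrec n z⟩, hP0, hQ0⟩
  set d : ℕ → ℝ := fun n => ‖P n 0‖ + ‖Q n 0‖
  have hd0 : ∀ n, 0 ≤ d n := fun n => by positivity
  have hd : Summable fun n => d n ^ 2 := .of_nonneg_of_le (fun n => sq_nonneg _)
    (fun n => add_sq_le) (hind.mul_left 2)
  have hβd : (Summable (fun n => dualFn α (‖P n 0‖ ^ 2)) ∧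
      Summable (fun n => dualFn α (‖Q n 0‖ ^ 2))) → Summable fun n => dualFn α (d n ^ 2) :=
    fun ⟨hβP, hβQ⟩ => hα.summable_dualFn_add_sq hind hβP hβQ
  have hPQ := h.norm_add_norm_le_mul_prod
  refine ⟨⟨fun hβ z => ⟨?_, ?_⟩, fun H => H 0⟩, fun hβ => ⟨?_, ?_⟩⟩
  · exact hα.summable_dualFn_norm_sq (norm_nonneg z) hd0 hd (hβd hβ) fun n =>
      (le_add_of_nonneg_right (norm_nonneg _)).trans (hPQ z n)
  · exact hα.summable_dualFn_norm_sq (norm_nonneg z) hd0 hd (hβd hβ) fun n =>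
      (le_add_of_nonneg_left (norm_nonneg _)).trans (hPQ z n)
  · exact hα.summable_dualFn_of_le_mul_succ (fun n => (one_div_pos.2 (hb n)).le) hd (hβd hβ)
      fun n => (one_div (b n)).trans_le (h.inv_le_mul (hb n))
  · exact hα.exists_Pmax_le_rpow hd0 hd (hβd hβ) fun z n =>
      (le_add_of_nonneg_right (norm_nonneg _)).trans (hPQ z n)
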